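/- Let G = Q₈ and let s, s′, t, t′ ∈ {σ, τ, στ} with s ≠ t and s′ ≠ t′. Consider the groups A_{s,t} = ⟨λ(s), ρ(t)⟩ with G acting by conjugation via λ. There exists a G-equivariant group isomorphism A_{s,t} → A_{s′,t′} if and only if s = s′. -/

import Mathlib

abbrev G : Type := QuaternionGroup 2
def σ : G := QuaternionGroup.a 1
def τ : G := QuaternionGroup.xa 0
def lam (g : G) : Equiv.Perm G := Equiv.mulLeft g
def rho (g : G) : Equiv.Perm G := Equiv.mulRight g⁻¹
def Est (s t : G) : Subgroup (Equiv.Perm G) :=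
  Subgroup.closure {lam s * rho t, lam (s^2), lam t * rho (s*t)}
def Ast (s t : G) : Subgroup (Equiv.Perm G) :=
  Subgroup.closure {lam s, rho t}
def eta (s t : G) : Equiv.Perm G :=
  List.formPerm [1, s, t, (s*t)⁻¹, s^2, s⁻¹, t⁻¹, s*t]
def Cst (s t : G) : Subgroup (Equiv.Perm G) :=
  Subgroup.closure {eta s t}
def Dsl (s t : G) : Subgroup (Equiv.Perm G) :=
  Subgroup.closure {lam s, lam t * rho s}
def Dsr (s t : G) : Subgroup (Equiv.Perm G) :=
  Subgroup.closure {rho s, lam s * rho t}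
def lamG : Subgroup (Equiv.Perm G) := Subgroup.closure (Set.range lam)
def rhoG : Subgroup (Equiv.Perm G) := Subgroup.closure (Set.range rho)
/-- `f` is `G`-equivariant for the conjugation action of `G` via `lam`. -/
def Equivariant {N₁ N₂ : Subgroup (Equiv.Perm G)} (f : N₁ ≃* N₂) : Prop :=
  ∀ (g : G) (η : Equiv.Perm G) (hη : η ∈ N₁) (hη' : lam g * η * (lam g)⁻¹ ∈ N₁),
    (f ⟨lam g * η * (lam g)⁻¹, hη'⟩ : Equiv.Perm G)
      = lam g * (f ⟨η, hη⟩ : Equiv.Perm G) * (lam g)⁻¹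

/-!
Every element of `A_{s',t'}` commutes with `λ(s')`, so equivariance at `g = s'` gives
`f(λ(s' s s'⁻¹)) = f(λ(s))`, and injectivity forces `s'` to commute with `s`; among `σ, τ, στ`
this means `s' = s`. Conversely, conjugating by an automorphism `φ` of `Q₈` with `φ s = s` and
`φ t = t'` maps `A_{s,t}` onto `A_{s,t'}`. It is equivariant as soon as every `g⁻¹ φ(g)` commutes
with `s`, since then `λ(φ g)` differs from `λ(g)` by a factor centralising `A_{s,t'}`. Such a `φ`
is the identity or the twist `g ↦ g` or `g ↦ g s` (as `g` commutes with `s` or not), by `s` or `s⁻¹`.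
-/

section Twist

variable {H : Type*} [Group H] [DecidableEq H]

-- On `Q₈` this is conjugation by `(1 + s⁻¹)/√2` among the unit quaternions.
def twist (s g : H) : H := if g * s = s * g then g else g * s

lemma twist_of_commute {s g : H} (h : Commute g s) : twist s g = g := if_pos h

lemma twist_of_not_commute {s g : H} (h : ¬Commute g s) : twist s g = g * s := if_neg h

lemma twist_inv_twist (s g : H) : twist s⁻¹ (twist s g) = g := by
  by_cases hg : Commute g s
  · rw [twist_of_commute hg, twist_of_commute hg.inv_right]
  · have : ¬Commute (g * s) s⁻¹ := fun h => hg <| by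
      simpa using (h.mul_left (Commute.refl s⁻¹)).inv_right
    rw [twist_of_not_commute hg, twist_of_not_commute this, mul_inv_cancel_right]

lemma twist_mul {s : H} (hs : ∀ g : H, Commute g s ∨ g * s = s⁻¹ * g) (x y : H) :
    twist s (x * y) = twist s x * twist s y := by
  by_cases hx : Commute x s <;> by_cases hy : Commute y s
  · rw [twist_of_commute hx, twist_of_commute hy, twist_of_commute (hx.mul_left hy)]
  · have : ¬Commute (x * y) s := fun h => hy <| by simpa using hx.inv_left.mul_left h
    rw [twist_of_commute hx, twist_of_not_commute hy, twist_of_not_commute this, mul_assoc]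
  · have : ¬Commute (x * y) s := fun h => hx <| by simpa using h.mul_left hy.inv_left
    rw [twist_of_not_commute hx, twist_of_commute hy, twist_of_not_commute this, mul_assoc,
      mul_assoc, hy.eq]
  · have hinv : ∀ g, ¬Commute g s → s * g = g * s⁻¹ := fun g hg => by
      rw [eq_mul_inv_iff_mul_eq, mul_assoc, (hs g).resolve_left hg, mul_inv_cancel_left]
    have hxy : Commute (x * y) s := by
      change x * y * s = s * (x * y)
      rw [mul_assoc, (hs y).resolve_left hy, ← mul_assoc, ← mul_assoc, hinv x hx]
    rw [twist_of_not_commute hx, twist_of_not_commute hy, twist_of_commute hxy, mul_assoc,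
      ← mul_assoc s, hinv y hy]
    group

def twistMulEquiv (s : H) (hs : ∀ g : H, Commute g s ∨ g * s = s⁻¹ * g) : H ≃* H where
  toFun := twist s
  invFun := twist s⁻¹
  left_inv := twist_inv_twist s
  right_inv g := by simpa using twist_inv_twist s⁻¹ g
  map_mul' := twist_mul hs

lemma commute_inv_mul_twist (s g : H) : Commute (g⁻¹ * twist s g) s := by
  by_cases hg : Commute g s
  · rw [twist_of_commute hg, inv_mul_cancel]; exact Commute.one_left s
  · rw [twist_of_not_commute hg, inv_mul_cancel_left]

end Twist

lemma lam_mul (g h : G) : lam (g * h) = lam g * lam h := by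
  ext x; simp [lam]

def lamHom : G →* Equiv.Perm G where
  toFun := lam
  map_one' := by ext x; simp [lam]
  map_mul' := lam_mul

lemma lam_inv (g : G) : lam g⁻¹ = (lam g)⁻¹ := map_inv lamHom g

lemma lam_zpow (g : G) (k : ℤ) : lam (g ^ k) = lam g ^ k := map_zpow lamHom g k

lemma lam_injective : Function.Injective lam := fun g h hgh => by
  simpa [lam] using congrArg (fun e : Equiv.Perm G => e 1) hgh

lemma commute_lam_rho (g h : G) : Commute (lam g) (rho h) := by
  ext x; simp [lam, rho, mul_assoc]

lemma lam_zpow_mem_Ast (s t : G) (k : ℤ) : lam (s ^ k) ∈ Ast s t := by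
  rw [lam_zpow]; exact zpow_mem (Subgroup.subset_closure (Set.mem_insert _ _)) k

lemma commute_lam_of_mem_Ast {z s t : G} (hz : Commute z s) {μ : Equiv.Perm G}
    (hμ : μ ∈ Ast s t) : Commute (lam z) μ := by
  suffices Ast s t ≤ Subgroup.centralizer {lam z} from
    (Subgroup.mem_centralizer_singleton_iff.mp (this hμ)).symm
  rw [Ast, Subgroup.closure_le, Set.insert_subset_iff, Set.singleton_subset_iff]
  simp only [SetLike.mem_coe, Subgroup.mem_centralizer_singleton_iff]
  exact ⟨by rw [← lam_mul, ← hz.eq, lam_mul], (commute_lam_rho z t).eq.symm⟩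

lemma commute_of_equivariant {s t s' t' : G} (hconj : s' * s * s'⁻¹ ∈ Subgroup.zpowers s)
    (f : Ast s t ≃* Ast s' t') (hf : Equivariant f) : Commute s' s := by
  obtain ⟨k, hk⟩ := hconj
  have hmem : lam s ∈ Ast s t := by simpa using lam_zpow_mem_Ast s t 1
  have hconj_lam : lam s' * lam s * (lam s')⁻¹ = lam (s' * s * s'⁻¹) := by
    rw [lam_mul, lam_mul, lam_inv]
  have hmem' : lam s' * lam s * (lam s')⁻¹ ∈ Ast s t := by
    rw [hconj_lam, ← hk]; exact lam_zpow_mem_Ast s t k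
  have hfix : f ⟨_, hmem'⟩ = f ⟨_, hmem⟩ := by
    ext1
    rw [hf s' _ hmem hmem', (commute_lam_of_mem_Ast (Commute.refl s') (f ⟨_, hmem⟩).2).eq,
      mul_inv_cancel_right]
  have : lam s' * lam s * (lam s')⁻¹ = lam s := congrArg Subtype.val (f.injective hfix)
  rw [hconj_lam] at this
  exact mul_inv_eq_iff_eq_mul.mp (lam_injective this)

lemma conj_lam (φ : G ≃* G) (g : G) :
    φ.toEquiv * lam g * φ.toEquiv⁻¹ = lam (φ g) := by
  ext x; simp [lam, Equiv.Perm.inv_def]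

lemma conj_rho (φ : G ≃* G) (g : G) :
    φ.toEquiv * rho g * φ.toEquiv⁻¹ = rho (φ g) := by
  ext x; simp [rho, Equiv.Perm.inv_def]

lemma Ast_map_conj (φ : G ≃* G) {s t s' t' : G} (hs : φ s = s') (ht : φ t = t') :
    (Ast s t).map (MulAut.conj φ.toEquiv : Equiv.Perm G →* Equiv.Perm G) = Ast s' t' := by
  rw [Ast, Ast, MonoidHom.map_closure, Set.image_pair]
  simp only [MonoidHom.coe_coe, MulAut.conj_apply, conj_lam, conj_rho, hs, ht]

def conjAst (φ : G ≃* G) {s t s' t' : G} (hs : φ s = s') (ht : φ t = t') :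
    Ast s t ≃* Ast s' t' :=
  ((MulAut.conj φ.toEquiv).subgroupMap (Ast s t)).trans
    (MulEquiv.subgroupCongr (Ast_map_conj φ hs ht))

lemma conjAst_apply (φ : G ≃* G) {s t s' t' : G} (hs : φ s = s') (ht : φ t = t')
    (η : Ast s t) : (conjAst φ hs ht η : Equiv.Perm G) = φ.toEquiv * η * φ.toEquiv⁻¹ :=
  rfl

lemma equivariant_conjAst (φ : G ≃* G) {s t s' t' : G} (hs : φ s = s') (ht : φ t = t')
    (hφ : ∀ g, Commute (g⁻¹ * φ g) s') : Equivariant (conjAst φ hs ht) := by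
  intro g η hη hη'
  set μ := (conjAst φ hs ht ⟨η, hη⟩ : Equiv.Perm G)
  have hcomm : lam (g⁻¹ * φ g) * μ = μ * lam (g⁻¹ * φ g) :=
    (commute_lam_of_mem_Ast (hφ g) (conjAst φ hs ht ⟨η, hη⟩).2).eq
  calc (conjAst φ hs ht ⟨_, hη'⟩ : Equiv.Perm G)
      = lam (φ g) * μ * (lam (φ g))⁻¹ := by
        simp only [μ, conjAst_apply, ← conj_lam φ g]; group
    _ = lam g * (lam (g⁻¹ * φ g) * μ) * (lam (g⁻¹ * φ g))⁻¹ * (lam g)⁻¹ := by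
        rw [lam_mul, lam_inv]; group
    _ = lam g * μ * (lam g)⁻¹ := by rw [hcomm]; group

lemma commute_or_mul_eq_inv_mul (g s : G) : Commute g s ∨ g * s = s⁻¹ * g := by
  revert g s; unfold Commute SemiconjBy; decide

lemma conj_mem_zpowers (g s : G) : g * s * g⁻¹ ∈ Subgroup.zpowers s := by
  rcases commute_or_mul_eq_inv_mul g s with h | h
  · rw [h.eq, mul_inv_cancel_right]; exact Subgroup.mem_zpowers s
  · rw [h, mul_inv_cancel_right]; exact inv_mem (Subgroup.mem_zpowers s)

lemma not_commute_of_ne {s s' : G} (hs : s ∈ ({σ, τ, σ * τ} : Set G))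
    (hs' : s' ∈ ({σ, τ, σ * τ} : Set G)) (h : s ≠ s') : ¬Commute s' s := by
  simp only [Set.mem_insert_iff, Set.mem_singleton_iff] at hs hs'
  unfold Commute SemiconjBy
  revert h
  rcases hs with rfl | rfl | rfl <;> rcases hs' with rfl | rfl | rfl <;> decide

lemma eq_or_eq_twist {s t t' : G} (hs : s ∈ ({σ, τ, σ * τ} : Set G))
    (ht : t ∈ ({σ, τ, σ * τ} : Set G)) (ht' : t' ∈ ({σ, τ, σ * τ} : Set G))
    (hst : s ≠ t) (hst' : s ≠ t') : t' = t ∨ t' = twist s t ∨ t' = twist s⁻¹ t := by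
  simp only [Set.mem_insert_iff, Set.mem_singleton_iff] at hs ht ht'
  unfold twist
  revert hst hst'
  rcases hs with rfl | rfl | rfl <;> rcases ht with rfl | rfl | rfl <;>
    rcases ht' with rfl | rfl | rfl <;> decide

lemma exists_mulEquiv_fixing {s t t' : G} (hs : s ∈ ({σ, τ, σ * τ} : Set G))
    (ht : t ∈ ({σ, τ, σ * τ} : Set G)) (ht' : t' ∈ ({σ, τ, σ * τ} : Set G))
    (hst : s ≠ t) (hst' : s ≠ t') :
    ∃ φ : G ≃* G, φ s = s ∧ φ t = t' ∧ ∀ g, Commute (g⁻¹ * φ g) s := by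
  rcases eq_or_eq_twist hs ht ht' hst hst' with rfl | rfl | rfl
  · exact ⟨MulEquiv.refl G, rfl, rfl, fun g => by simp⟩
  · exact ⟨twistMulEquiv s (commute_or_mul_eq_inv_mul · s), twist_of_commute (Commute.refl s),
      rfl, commute_inv_mul_twist s⟩
  · exact ⟨twistMulEquiv s⁻¹ (commute_or_mul_eq_inv_mul · s⁻¹),
      twist_of_commute (Commute.refl s).inv_right, rfl,
      fun g => by have := (commute_inv_mul_twist s⁻¹ g).inv_right; rwa [inv_inv] at this⟩

theorem stmt11 (s t s' t' : G)
    (hs : s ∈ ({σ, τ, σ * τ} : Set G)) (ht : t ∈ ({σ, τ, σ * τ} : Set G))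
    (hs' : s' ∈ ({σ, τ, σ * τ} : Set G)) (ht' : t' ∈ ({σ, τ, σ * τ} : Set G))
    (hst : s ≠ t) (hst' : s' ≠ t') :
    (∃ f : ↥(Ast s t) ≃* ↥(Ast s' t'), Equivariant f) ↔ s = s' := by
  constructor
  · rintro ⟨f, hf⟩
    by_contra hne
    exact not_commute_of_ne hs hs' hne (commute_of_equivariant (conj_mem_zpowers s' s) f hf)
  · rintro rfl
    obtain ⟨φ, hφs, hφt, hφ⟩ := exists_mulEquiv_fixing hs ht ht' hst hst'
    exact ⟨conjAst φ hφs hφt, equivariant_conjAst φ hφs hφt hφ⟩
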